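/- arXiv:1811.06810 — 3 statements merged into one kernel-verified Lean document; each statement's English description precedes it below -/
import Mathlib

section
/- Let R be a join-semilattice, X and Y types, and ε, δ multi-valued selection functions on X and Y respectively. If ε and δ are both upwards closed, then the product ε ⊗ δ is an upwards closed multi-valued selection function on X × Y. -/
universe u

/-- A multi-valued selection function on `X` with outcomes in `R`:
a map `(X → R) → Finset X` whose values are all nonempty. -/
structure Sel (R X : Type u) [SemilatticeSup R] : Type u where
  fn : (X → R) → Finset X
  ne : ∀ k, (fn k).Nonempty

variable {R : Type u} [SemilatticeSup R]

/-- A selection function is witnessing if whenever `x` is selected in the context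
obtained by taking pointwise joins over an indexing function `I`, there is a choice
function `p` for `I` in whose induced context `x` is also selected. -/
def Witnessing {X : Type u} (ε : Sel R X) : Prop :=
  ∀ (I : X → Finset (X → R)) (hI : ∀ x, (I x).Nonempty) (x : X),
    x ∈ ε.fn (fun x' => (I x').sup' (hI x') (fun P => P x')) →
      ∃ p : X → X → R, (∀ x', p x' ∈ I x') ∧ x ∈ ε.fn (fun x' => p x' x')

/-- A selection function is upwards closed if whenever `x` is selected in the context
induced by a choice function `p` for an indexing function `I`, then `x` is also selected
in the context obtained by taking pointwise joins over `I`. -/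
def UpwardsClosed {X : Type u} (ε : Sel R X) : Prop :=
  ∀ (I : X → Finset (X → R)) (hI : ∀ x, (I x).Nonempty) (p : X → X → R),
    (∀ x', p x' ∈ I x') → ∀ x, x ∈ ε.fn (fun x' => p x' x') →
      x ∈ ε.fn (fun x' => (I x').sup' (hI x') (fun P => P x'))

/-- The product of selection functions. -/
def Sel.prod {X Y : Type u} (ε : Sel R X) (δ : Sel R Y) : Sel R (X × Y) where
  fn q :=
    ((ε.fn (fun x => (δ.fn (fun y => q (x, y))).sup' (δ.ne _) (fun y => q (x, y)))).sigma
      (fun x => δ.fn (fun y => q (x, y)))).map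
      ⟨fun p => (p.1, p.2), fun a b h => by
        cases a; cases b
        simp only [Prod.mk.injEq] at h
        obtain ⟨h1, h2⟩ := h
        subst h1; subst h2; rfl⟩
  ne q := by
    obtain ⟨x, hx⟩ := ε.ne (fun x => (δ.fn (fun y => q (x, y))).sup' (δ.ne _) (fun y => q (x, y)))
    obtain ⟨y, hy⟩ := δ.ne (fun y => q (x, y))
    exact ⟨(x, y), Finset.mem_map.2 ⟨⟨x, y⟩, Finset.mem_sigma.mpr ⟨hx, hy⟩, rfl⟩⟩

/-- A strategy profile `(σ₁, σ₂)` is rational. -/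
def IsRational {X Y : Type u} (ε : Sel R X) (δ : Sel R Y) (q : X × Y → R)
    (σ₁ : X) (σ₂ : X → Y) : Prop :=
  (∃ yf : X → Y, (∀ x, yf x ∈ δ.fn (fun y' => q (x, y'))) ∧
      σ₁ ∈ ε.fn (fun x => q (x, yf x))) ∧
  ∀ x, σ₂ x ∈ δ.fn (fun y' => q (x, y'))

/-- The set of rational plays. -/
def RatPlays {X Y : Type u} (ε : Sel R X) (δ : Sel R Y) (q : X × Y → R) : Set (X × Y) :=
  {p | ∃ σ₁ σ₂, IsRational ε δ q σ₁ σ₂ ∧ p = (σ₁, σ₂ σ₁)}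

/-- Subgame perfect strategy profile. -/
def SubgamePerfect {X Y : Type u} (ε : Sel R X) (δ : Sel R Y) (q : X × Y → R)
    (σ₁ : X) (σ₂ : X → Y) : Prop :=
  σ₁ ∈ ε.fn (fun x => q (x, σ₂ x)) ∧ ∀ x, σ₂ x ∈ δ.fn (fun y => q (x, y))

/-- The set of subgame perfect plays. -/
def SPPlays {X Y : Type u} (ε : Sel R X) (δ : Sel R Y) (q : X × Y → R) : Set (X × Y) :=
  {p | ∃ σ₁ σ₂, SubgamePerfect ε δ q σ₁ σ₂ ∧ p = (σ₁, σ₂ σ₁)}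

theorem upwardsClosed_iff_monotone {X : Type u} (ε : Sel R X) :
    UpwardsClosed ε ↔ Monotone ε.fn := by
  classical
  constructor
  · intro hε k k' hkk' x hx
    -- Index every point by `{k, k'}` and choose `k`: the pointwise join is `k'`.
    have hsup : (fun x' => ({k, k'} : Finset (X → R)).sup' (Finset.insert_nonempty _ _)
        (fun P => P x')) = k' := by
      funext x'
      rw [Finset.sup'_insert (Finset.singleton_nonempty _), Finset.sup'_singleton]
      exact sup_eq_right.mpr (hkk' x')
    simpa only [hsup] using hε (fun _ => {k, k'}) (fun _ => Finset.insert_nonempty _ _)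
      (fun _ => k) (fun _ => Finset.mem_insert_self _ _) x hx
  · intro hmono I hI p hp x hx
    exact hmono (fun x' => Finset.le_sup' (fun P => P x') (hp x')) hx

theorem Sel.mem_prod_fn {X Y : Type u} (ε : Sel R X) (δ : Sel R Y) (q : X × Y → R)
    (x : X) (y : Y) :
    (x, y) ∈ (ε.prod δ).fn q ↔
      x ∈ ε.fn (fun x' => (δ.fn (fun y' => q (x', y'))).sup' (δ.ne _) (fun y' => q (x', y'))) ∧
        y ∈ δ.fn (fun y' => q (x, y')) := by
  simp only [Sel.prod, Finset.mem_map, Finset.mem_sigma]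
  constructor
  · rintro ⟨⟨a, b⟩, h, heq⟩
    cases heq
    exact h
  · intro h
    exact ⟨⟨x, y⟩, h, rfl⟩

theorem Sel.monotone_prod_fn {X Y : Type u} {ε : Sel R X} {δ : Sel R Y}
    (hε : Monotone ε.fn) (hδ : Monotone δ.fn) : Monotone (ε.prod δ).fn := by
  intro q q' hqq' ⟨x, y⟩ hxy
  rw [Sel.mem_prod_fn] at hxy ⊢
  have hδq : ∀ x', δ.fn (fun y' => q (x', y')) ⊆ δ.fn (fun y' => q' (x', y')) :=
    fun x' => hδ fun y' => hqq' (x', y')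
  refine ⟨hε (fun x' => ?_) hxy.1, hδq x hxy.2⟩
  exact Finset.sup'_le _ _ fun y' hy' =>
    (hqq' (x', y')).trans (Finset.le_sup' (fun y' => q' (x', y')) (hδq x' hy'))

/-- If `ε` and `δ` are both upwards closed, so is their product `ε ⊗ δ`. -/
theorem upwardsClosed_prod {R X Y : Type u} [SemilatticeSup R]
    (ε : Sel R X) (δ : Sel R Y)
    (hε : UpwardsClosed ε) (hδ : UpwardsClosed δ) :
    UpwardsClosed (ε.prod δ) := by
  rw [upwardsClosed_iff_monotone] at hε hδ ⊢
  exact Sel.monotone_prod_fn hε hδ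
end

section
/- Let R be a join-semilattice and let (q, (ε₁, …, εₙ)) be an n-round sequential game with move types X₁, …, Xₙ. Suppose there is an index j < n and a function q_j : X_j × Xₙ → R such that q x = q_j (x_j, x_n) for every play x. Then (x_j, x_n) ∈ (ε_j ⊗ εₙ)(q_j) if and only if there exist x_i ∈ X_i for all i ∉ {j, n} such that (x₁, …, xₙ) ∈ (⨂_{i=1}^n ε_i)(q). -/
universe u

variable {R : Type u} [SemilatticeSup R]

/-- Transport a selection function along an equivalence of move types. -/
def Sel.comap {X Y : Type u} (ε : Sel R X) (e : X ≃ Y) : Sel R Y where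
  fn k := (ε.fn (fun x => k (e x))).map e.toEmbedding
  ne k := (ε.ne _).map

/-- The identification of `X 0` with plays of a one-round game. -/
def oneEquiv (X : Fin 1 → Type u) : X 0 ≃ ∀ i, X i where
  toFun x i := Fin.cases x (fun j => j.elim0) i
  invFun f := f 0
  left_inv x := by simp
  right_inv f := funext fun i => Fin.cases rfl (fun j => j.elim0) i

/-- The `n`-fold product of selection functions, iterating the binary product to the
left: `⨂_{i} ε_i = ε 0 ⊗ (⨂_{i>0} ε_i)`, identifying plays `∀ i, X i` with
`X 0 × (∀ i, X i.succ)`; the product of a single selection function is itself. -/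
def bigProd : {n : ℕ} → {X : Fin (n + 1) → Type u} → (∀ i, Sel R (X i)) →
    Sel R (∀ i, X i)
  | 0, X, ε => (ε 0).comap (oneEquiv X)
  | _ + 1, X, ε => ((ε 0).prod (bigProd (fun i => ε i.succ))).comap (Fin.consEquiv X)

theorem mem_prod_iff {X Y : Type u} (ε : Sel R X) (δ : Sel R Y) (q : X × Y → R) (x : X) (y : Y) :
    (x, y) ∈ (ε.prod δ).fn q ↔
      x ∈ ε.fn (fun x => (δ.fn (fun y => q (x, y))).sup' (δ.ne _) (fun y => q (x, y))) ∧
      y ∈ δ.fn (fun y => q (x, y)) := by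
  simp only [Sel.prod, Finset.mem_map, Finset.mem_sigma, Function.Embedding.coeFn_mk]
  constructor
  · rintro ⟨⟨a, b⟩, ⟨h1, h2⟩, h3⟩
    obtain ⟨rfl, rfl⟩ := h3
    exact ⟨h1, h2⟩
  · rintro ⟨h1, h2⟩; exact ⟨⟨x, y⟩, ⟨h1, h2⟩, rfl⟩

theorem mem_comap_iff {X Y : Type u} (ε : Sel R X) (e : X ≃ Y) (k : Y → R) (y : Y) :
    y ∈ (ε.comap e).fn k ↔ e.symm y ∈ ε.fn (fun x => k (e x)) := by
  simp only [Sel.comap, Finset.mem_map, Equiv.coe_toEmbedding]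
  constructor
  · rintro ⟨x, hx, rfl⟩; simpa using hx
  · intro h; exact ⟨_, h, by simp⟩

/-- Last-coordinate lemma: if the outcome depends only on the last coordinate,
membership in the last selection function is equivalent to extendability to a
play of the big product. -/
theorem lastA1 : ∀ (n : ℕ) (X : Fin (n + 1) → Type u) (ε : ∀ i, Sel R (X i))
    (ql : X (Fin.last n) → R) (q : (∀ i, X i) → R),
    (∀ x, q x = ql (x (Fin.last n))) → ∀ xn : X (Fin.last n),
    (xn ∈ (ε (Fin.last n)).fn ql ↔
      ∃ x : ∀ i, X i, x (Fin.last n) = xn ∧ x ∈ (bigProd ε).fn q)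
  | 0, X, ε, ql, q, hq, xn => by
    have hctx : (fun a : X 0 => q (oneEquiv X a)) = ql := by
      funext a
      rw [hq]
      rfl
    constructor
    · intro h
      refine ⟨oneEquiv X xn, rfl, ?_⟩
      rw [show (bigProd ε) = (ε 0).comap (oneEquiv X) from rfl, mem_comap_iff, hctx]
      simpa using h
    · rintro ⟨x, rfl, hx⟩
      rw [show (bigProd ε) = (ε 0).comap (oneEquiv X) from rfl, mem_comap_iff, hctx] at hx
      exact hx
  | (m + 1), X, ε, ql, q, hq, xn => by
    have hcons : ∀ (x0 : X 0) (rest : ∀ i : Fin (m + 1), X i.succ),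
        (Fin.cons x0 rest : ∀ i, X i) (Fin.last (m + 1)) = rest (Fin.last m) :=
      fun x0 rest => Fin.cons_succ x0 rest (Fin.last m)
    set qt : (∀ i : Fin (m + 1), X i.succ) → R := fun rest => ql (rest (Fin.last m)) with hqt
    have htail : ∀ (x0 : X 0),
        (fun rest : ∀ i : Fin (m + 1), X i.succ => q ((Fin.consEquiv X) (x0, rest))) = qt := by
      intro x0
      funext rest
      rw [show ((Fin.consEquiv X) (x0, rest)) = (Fin.cons x0 rest : ∀ i, X i) from rfl, hq, hcons]
    have IH := lastA1 m (fun i => X i.succ) (fun i => ε i.succ)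
      (fun a => ql a) qt (fun rest => rfl)
    constructor
    · intro h
      obtain ⟨rest, hr1, hr2⟩ := (IH xn).mp h
      obtain ⟨x0, hx0⟩ := (ε 0).ne (fun a =>
        ((bigProd fun i => ε i.succ).fn (fun rest => q ((Fin.consEquiv X) (a, rest)))).sup'
          ((bigProd fun i => ε i.succ).ne _) (fun rest => q ((Fin.consEquiv X) (a, rest))))
      refine ⟨(Fin.consEquiv X) (x0, rest), ?_, ?_⟩
      · exact (hcons x0 rest).trans hr1
      · rw [show (bigProd ε) = ((ε 0).prod (bigProd fun i => ε i.succ)).comap (Fin.consEquiv X)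
          from rfl, mem_comap_iff]
        rw [show (Fin.consEquiv X).symm ((Fin.consEquiv X) (x0, rest)) = (x0, rest) from
          Equiv.symm_apply_apply _ _]
        rw [mem_prod_iff]
        refine ⟨hx0, ?_⟩
        rw [htail x0]
        exact hr2
    · rintro ⟨x, hxn, hx⟩
      rw [show (bigProd ε) = ((ε 0).prod (bigProd fun i => ε i.succ)).comap (Fin.consEquiv X)
        from rfl, mem_comap_iff] at hx
      rcases hsx : (Fin.consEquiv X).symm x with ⟨x0, rest⟩
      rw [hsx, mem_prod_iff] at hx
      obtain ⟨-, h2⟩ := hx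
      rw [htail x0] at h2
      have hxr : x (Fin.last (m + 1)) = rest (Fin.last m) := by
        conv_lhs => rw [← Equiv.apply_symm_apply (Fin.consEquiv X) x, hsx]
        exact hcons x0 rest
      rw [← hxn, hxr]
      exact (IH _).mpr ⟨rest, rfl, h2⟩

/-- Sup version of the last-coordinate lemma. -/
theorem lastA2 (n : ℕ) (X : Fin (n + 1) → Type u) (ε : ∀ i, Sel R (X i))
    (ql : X (Fin.last n) → R) (q : (∀ i, X i) → R)
    (hq : ∀ x, q x = ql (x (Fin.last n))) :
    ((bigProd ε).fn q).sup' ((bigProd ε).ne q) q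
      = ((ε (Fin.last n)).fn ql).sup' ((ε (Fin.last n)).ne ql) ql := by
  apply le_antisymm
  · apply Finset.sup'_le
    intro x hx
    rw [hq]
    exact Finset.le_sup' ql ((lastA1 n X ε ql q hq _).mpr ⟨x, rfl, hx⟩)
  · apply Finset.sup'_le
    intro xn hxn
    obtain ⟨x, hx1, hx2⟩ := (lastA1 n X ε ql q hq xn).mp hxn
    calc ql xn = q x := by rw [hq, hx1]
    _ ≤ _ := Finset.le_sup' q hx2

theorem auxMain : ∀ (n : ℕ) (X : Fin (n + 1) → Type u) (ε : ∀ i, Sel R (X i))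
    (j : Fin (n + 1)), j ≠ Fin.last n →
    ∀ (qj : X j × X (Fin.last n) → R) (q : (∀ i, X i) → R),
    (∀ x, q x = qj (x j, x (Fin.last n))) → ∀ (xj : X j) (xn : X (Fin.last n)),
    ((xj, xn) ∈ ((ε j).prod (ε (Fin.last n))).fn qj ↔
      ∃ x : ∀ i, X i, x j = xj ∧ x (Fin.last n) = xn ∧ x ∈ (bigProd ε).fn q)
  | 0, X, ε, j, hj, _, _, _, _, _ => absurd ((Fin.fin_one_eq_zero j).trans (Fin.fin_one_eq_zero (Fin.last 0)).symm) hj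
  | (m + 1), X, ε, j, hj, qj, q, hq, xj, xn => by
    have hcons : ∀ (x0 : X 0) (rest : ∀ i : Fin (m + 1), X i.succ),
        (Fin.cons x0 rest : ∀ i, X i) (Fin.last (m + 1)) = rest (Fin.last m) :=
      fun x0 rest => Fin.cons_succ x0 rest (Fin.last m)
    revert hj qj hq xj
    induction j using Fin.cases with
    | zero =>
      intro hj qj hq xj
      have hfa : ∀ a : X 0,
          (fun rest : ∀ i : Fin (m + 1), X i.succ => q ((Fin.consEquiv X) (a, rest)))
            = (fun rest : ∀ i : Fin (m + 1), X i.succ => qj (a, rest (Fin.last m))) := by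
        intro a
        funext rest
        rw [show ((Fin.consEquiv X) (a, rest)) = (Fin.cons a rest : ∀ i, X i) from rfl, hq,
          hcons]
        rfl
      have hK : (fun a : X 0 =>
            ((bigProd fun i => ε i.succ).fn
                (fun rest => q ((Fin.consEquiv X) (a, rest)))).sup'
              ((bigProd fun i => ε i.succ).ne _)
              (fun rest => q ((Fin.consEquiv X) (a, rest))))
          = (fun a : X 0 =>
            ((ε (Fin.last (m + 1))).fn (fun y => qj (a, y))).sup'
              ((ε (Fin.last (m + 1))).ne _) (fun y => qj (a, y))) := by
        funext a
        rw [hfa a]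
        exact lastA2 m (fun i => X i.succ) (fun i => ε i.succ) (fun y => qj (a, y))
          (fun rest => qj (a, rest (Fin.last m))) (fun rest => rfl)
      rw [mem_prod_iff]
      constructor
      · rintro ⟨h1, h2⟩
        rw [← hK] at h1
        obtain ⟨rest, hr1, hr2⟩ := (lastA1 m (fun i => X i.succ) (fun i => ε i.succ)
          (fun y => qj (xj, y)) (fun rest => qj (xj, rest (Fin.last m)))
          (fun rest => rfl) xn).mp h2
        refine ⟨(Fin.consEquiv X) (xj, rest), rfl, (hcons xj rest).trans hr1, ?_⟩
        rw [show (bigProd ε)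
            = ((ε 0).prod (bigProd fun i => ε i.succ)).comap (Fin.consEquiv X) from rfl,
          mem_comap_iff, Equiv.symm_apply_apply, mem_prod_iff]
        refine ⟨h1, ?_⟩
        rw [hfa xj]
        exact hr2
      · rintro ⟨x, hx0, hxn, hx⟩
        rw [show (bigProd ε)
            = ((ε 0).prod (bigProd fun i => ε i.succ)).comap (Fin.consEquiv X) from rfl,
          mem_comap_iff] at hx
        rcases hsx : (Fin.consEquiv X).symm x with ⟨x0, rest⟩
        rw [hsx, mem_prod_iff] at hx
        obtain ⟨h1, h2⟩ := hx
        have hxeq : x = (Fin.consEquiv X) (x0, rest) := by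
          rw [← hsx, Equiv.apply_symm_apply]
        have hx0' : x0 = xj := by rw [← hx0, hxeq]; rfl
        subst hx0'
        rw [hfa x0] at h2
        have hlast : rest (Fin.last m) = xn := by
          rw [← hxn, hxeq]; exact (hcons x0 rest).symm
        constructor
        · rw [← hK]
          exact h1
        · exact (lastA1 m (fun i => X i.succ) (fun i => ε i.succ)
            (fun y => qj (x0, y)) (fun rest => qj (x0, rest (Fin.last m)))
            (fun rest => rfl) xn).mpr ⟨rest, hlast, h2⟩
    | succ i =>
      intro hj qj hq xj
      have hi : i ≠ Fin.last m := by
        intro h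
        apply hj
        rw [h]
        rfl
      have hfa : ∀ a : X 0,
          (fun rest : ∀ i : Fin (m + 1), X i.succ => q ((Fin.consEquiv X) (a, rest)))
            = (fun rest : ∀ k : Fin (m + 1), X k.succ => qj (rest i, rest (Fin.last m))) := by
        intro a
        funext rest
        rw [show ((Fin.consEquiv X) (a, rest)) = (Fin.cons a rest : ∀ i, X i) from rfl, hq,
          hcons]
        rfl
      have IH := auxMain m (fun k => X k.succ) (fun k => ε k.succ) i hi qj
        (fun rest => qj (rest i, rest (Fin.last m))) (fun rest => rfl) xj xn
      constructor
      · intro h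
        obtain ⟨rest, hr1, hr2, hr3⟩ := IH.mp h
        obtain ⟨x0, hx0⟩ := (ε 0).ne (fun a =>
          ((bigProd fun i => ε i.succ).fn (fun rest => q ((Fin.consEquiv X) (a, rest)))).sup'
            ((bigProd fun i => ε i.succ).ne _) (fun rest => q ((Fin.consEquiv X) (a, rest))))
        refine ⟨(Fin.consEquiv X) (x0, rest), hr1, (hcons x0 rest).trans hr2, ?_⟩
        rw [show (bigProd ε)
            = ((ε 0).prod (bigProd fun i => ε i.succ)).comap (Fin.consEquiv X) from rfl,
          mem_comap_iff, Equiv.symm_apply_apply, mem_prod_iff]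
        refine ⟨hx0, ?_⟩
        rw [hfa x0]
        exact hr3
      · rintro ⟨x, hxj, hxn, hx⟩
        rw [show (bigProd ε)
            = ((ε 0).prod (bigProd fun i => ε i.succ)).comap (Fin.consEquiv X) from rfl,
          mem_comap_iff] at hx
        rcases hsx : (Fin.consEquiv X).symm x with ⟨x0, rest⟩
        rw [hsx, mem_prod_iff] at hx
        obtain ⟨-, h2⟩ := hx
        rw [hfa x0] at h2
        have hxeq : x = (Fin.consEquiv X) (x0, rest) := by
          rw [← hsx, Equiv.apply_symm_apply]
        have e1 : rest i = xj := by rw [← hxj, hxeq]; rfl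
        have e2 : rest (Fin.last m) = xn := by rw [← hxn, hxeq]; exact (hcons x0 rest).symm
        exact IH.mpr ⟨rest, e1, e2, h2⟩
/-- If the outcome of an `(n+1)`-round game depends only on rounds `j` and `n` (the
last round), say via `qj`, then `(x_j, x_n) ∈ (ε_j ⊗ ε_n)(q_j)` iff the remaining
coordinates can be filled in to give a play in the `(n+1)`-fold product on `q`. -/
theorem prod_pair_iff_bigProd {R : Type u} [SemilatticeSup R] {n : ℕ}
    {X : Fin (n + 1) → Type u} [∀ i, Fintype (X i)] [∀ i, Nonempty (X i)]
    (ε : ∀ i, Sel R (X i)) (j : Fin (n + 1)) (hj : j ≠ Fin.last n)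
    (qj : X j × X (Fin.last n) → R) (q : (∀ i, X i) → R)
    (hq : ∀ x : ∀ i, X i, q x = qj (x j, x (Fin.last n)))
    (xj : X j) (xn : X (Fin.last n)) :
    (xj, xn) ∈ ((ε j).prod (ε (Fin.last n))).fn qj ↔
      ∃ x : ∀ i, X i, x j = xj ∧ x (Fin.last n) = xn ∧ x ∈ (bigProd ε).fn q := by
  exact auxMain n X ε j hj qj q hq xj xn
end

section
/- Let R be a join-semilattice with at least two elements, let n ≥ 1, let X₁, …, X_{n-1} be nonempty finite types and ε_i a multi-valued selection function on X_i for each i < n. Then ε_i is upwards closed for every i < n if and only if for every nonempty finite type Xₙ, every multi-valued selection function εₙ on Xₙ, and every outcome function q : X₁ × ⋯ × Xₙ → R, the set (⨂_{i=1}^n ε_i)(q) is a superset of the set of Σ(G) plays of the game G = (q, (ε₁, …, εₙ)). -/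
/-!
Forward direction, by induction on the number of rounds. A `Σ(G)` play is its first move `a₀`
followed by a `Σ(G)` play of the subgame after `a₀`; likewise, under the later strategies that
witness the consistency of the first-round strategy, the subgame play after any first move `a`
is a `Σ` play, hence by induction lies in the product of the remaining selection functions. So
`a₀` is selected against one product-selected continuation per move, and upwards closure turns
this into selection against the join over all of them: the first condition of the product.

Converse. Given an indexing function `I` on `X i`, append a last round whose moves encode the
members of `⋃ I`, with a selection function that, in the context of move `a` at round `i`,
selects exactly the codes of `I a`; the outcome depends only on rounds `i` and `n`. Answering
`a` with the code of `p a` is a `Σ(G)` strategy, and so is playing at round `i` any `x` selected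
against it. The resulting play lies in the product, which says that `x` is selected against
the joins `⋁ {P a | P ∈ I a}`.
-/

universe u

variable {R : Type u} [SemilatticeSup R]

/-- A partial play of length `k` in a game with move types `X`: the moves of all
rounds `j` with `j < k`. -/
def PartialPlay {n : ℕ} (X : Fin n → Type u) (k : ℕ) : Type u :=
  ∀ j : Fin n, (j : ℕ) < k → X j

/-- A strategy for round `i`: a choice of move in `X i` contingent on the moves of
all previous rounds. -/
def Strat {n : ℕ} (X : Fin n → Type u) (i : Fin n) : Type u :=
  PartialPlay X i → X i

/-- Extending a partial play by one further move. -/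
def PartialPlay.snoc {n : ℕ} {X : Fin n → Type u} {i : Fin n}
    (x : PartialPlay X i) (y : X i) : PartialPlay X (i + 1) :=
  fun j hj =>
    if h : (j : ℕ) < i then x j h
    else (Fin.ext (by omega) : i = j) ▸ y

/-- The moves of the first `m` rounds obtained by playing out the strategies `σ`
from the partial play `x` of length `k` onwards. -/
def extPlay {n : ℕ} {X : Fin n → Type u} (σ : ∀ i, Strat X i) (k : ℕ)
    (x : PartialPlay X k) : (m : ℕ) → PartialPlay X m
  | 0 => fun _ hj => absurd hj (Nat.not_lt_zero _)
  | m + 1 => fun j hj =>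
      if hk : (j : ℕ) < k then x j hk
      else if hm : (j : ℕ) < m then extPlay σ k x m j hm
      else σ j (fun j' hj' => extPlay σ k x m j' (by omega))

/-- The strategic extension of a partial play `x` by the strategies `σ` (only the
strategies of rounds `≥ k` are used). -/
def stratExt {n : ℕ} {X : Fin n → Type u} (σ : ∀ i, Strat X i) (k : ℕ)
    (x : PartialPlay X k) : ∀ j, X j :=
  fun j => extPlay σ k x n j j.isLt

/-- The strategic play of a strategy profile `σ`. -/
def stratPlay {n : ℕ} {X : Fin n → Type u} (σ : ∀ i, Strat X i) : ∀ j, X j :=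
  stratExt σ 0 (fun _ hj => absurd hj (Nat.not_lt_zero _))

/-- A (round-indexed) set `Γ` of strategies is consistent for the game with outcome
function `q` and selection functions `ε`: for every round `i`, every `σi ∈ Γ i` and
every partial play `x` of length `i`, there are strategies in `Γ` for the rounds
after `i` such that `σi x` is selected by `ε i` in the context where each possible
next move `y` leads to the outcome of the strategic extension of `(x, y)`. -/
def Consistent {n : ℕ} {X : Fin n → Type u} {R : Type u} [SemilatticeSup R]
    (q : (∀ i, X i) → R) (ε : ∀ i, Sel R (X i)) (Γ : ∀ i, Set (Strat X i)) : Prop :=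
  ∀ (i : Fin n), ∀ σi ∈ Γ i, ∀ x : PartialPlay X i,
    ∃ σ : ∀ j, Strat X j, (∀ j, i < j → σ j ∈ Γ j) ∧
      σi x ∈ (ε i).fn (fun y => q (stratExt σ (i + 1) (x.snoc y)))

/-- The maximal consistent set `Σ(G)` of strategies, defined by downwards recursion
on the round: a round-`i` strategy belongs to `Σ(G)` iff it, together with all the
strategies of `Σ(G)` at later rounds, forms a consistent set. -/
def SigmaG {n : ℕ} {X : Fin n → Type u} {R : Type u} [SemilatticeSup R]
    (q : (∀ i, X i) → R) (ε : ∀ i, Sel R (X i)) : (i : Fin n) → Set (Strat X i) :=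
  fun i =>
    {σi | Consistent q ε (fun j =>
      if h : i = j then {h ▸ σi}
      else if hij : i < j then SigmaG q ε j
      else ∅)}
termination_by i => n - (i : ℕ)
decreasing_by
  have h1 : (i : ℕ) < (j : ℕ) := hij
  have h2 : (j : ℕ) < n := j.isLt
  omega

/-- `x` is a `Σ(G)` play if it is the strategic play of a strategy profile all of
whose strategies lie in `Σ(G)`. -/
def IsSigmaPlay {n : ℕ} {X : Fin n → Type u} {R : Type u} [SemilatticeSup R]
    (q : (∀ i, X i) → R) (ε : ∀ i, Sel R (X i)) (x : ∀ i, X i) : Prop :=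
  ∃ σ : ∀ i, Strat X i, (∀ i, σ i ∈ SigmaG q ε i) ∧ x = stratPlay σ

/-- The family of move types of an `(m+1)`-round game whose first `m` move types are
given by `X` and whose last move type is `Y`. -/
def snocTypes {m : ℕ} (X : Fin m → Type u) (Y : Type u) : Fin (m + 1) → Type u :=
  Fin.snoc (α := fun _ => Type u) X Y

/-- Appending a final-round selection function to a family. -/
def snocSel {R : Type u} [SemilatticeSup R] {m : ℕ} {X : Fin m → Type u} {Y : Type u}
    (ε : ∀ i, Sel R (X i)) (δ : Sel R Y) :
    ∀ i : Fin (m + 1), Sel R (snocTypes X Y i) :=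
  Fin.lastCases
    (cast (by simp [snocTypes]) δ)
    (fun i => cast (by simp [snocTypes]) (ε i))

section Sel

variable {X Y : Type u}

theorem Sel.nonempty (ε : Sel R X) : Nonempty X := by
  by_contra h
  obtain ⟨x, -⟩ := ε.ne (fun x => (not_nonempty_iff.mp h).elim x)
  exact h ⟨x⟩

theorem Sel.mem_comap (ε : Sel R X) (e : X ≃ Y) (k : Y → R) (y : Y) :
    y ∈ (ε.comap e).fn k ↔ e.symm y ∈ ε.fn (fun x => k (e x)) := by
  simp only [Sel.comap, Finset.mem_map_equiv]

theorem Sel.mk_mem_prod (ε : Sel R X) (δ : Sel R Y) (q : X × Y → R)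
    (x : X) (y : Y) :
    (x, y) ∈ (ε.prod δ).fn q ↔
      x ∈ ε.fn (fun x' =>
        (δ.fn (fun y' => q (x', y'))).sup' (δ.ne _) (fun y' => q (x', y'))) ∧
      y ∈ δ.fn (fun y' => q (x, y')) := by
  simp only [Sel.prod, Finset.mem_map, Finset.mem_sigma]
  constructor
  · rintro ⟨⟨x, y⟩, h, ⟨⟩⟩
    exact h
  · exact fun h => ⟨⟨x, y⟩, h, rfl⟩

/-- Upwards closure of `ε` for the indexing functions `a ↦ {F a y | y ∈ δ.fn (F a)}` that a
later round with selection function `δ` produces. -/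
def UpwardsClosedAgainst (ε : Sel R X) (δ : Sel R Y) : Prop :=
  ∀ (F : X → Y → R) (f : X → Y), (∀ a, f a ∈ δ.fn (F a)) →
    ∀ x ∈ ε.fn (fun a => F a (f a)), x ∈ ε.fn (fun a => (δ.fn (F a)).sup' (δ.ne _) (F a))

theorem UpwardsClosed.upwardsClosedAgainst {ε : Sel R X} (h : UpwardsClosed ε) (δ : Sel R Y) :
    UpwardsClosedAgainst ε δ := by
  classical
  intro F f hf x hx
  have := h (fun a => (δ.fn (F a)).image fun y _ => F a y) (fun a => (δ.ne _).image _)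
    (fun a _ => F a (f a)) (fun a => Finset.mem_image_of_mem _ (hf a)) x hx
  simpa only [Finset.sup'_image, Function.comp_def] using this

theorem upwardsClosed_of_forall_upwardsClosedAgainst [Nontrivial R] [Fintype X] {ε : Sel R X}
    (h : ∀ (Y : Type u) [Fintype Y] (δ : Sel R Y), UpwardsClosedAgainst ε δ) :
    UpwardsClosed ε := by
  classical
  intro I hI p hp x hx
  have : Nonempty X := ⟨x⟩
  obtain ⟨r₀, r₁, hr⟩ := exists_pair_ne R
  let U := Finset.univ.biUnion I
  have mem_U : ∀ a, ∀ P ∈ I a, P ∈ U := fun a P hP =>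
    Finset.mem_biUnion.mpr ⟨a, Finset.mem_univ a, hP⟩
  -- The new round's moves are the members of `U` and tags `b : X`; the tags make `K`
  -- injective, so that `δ` can read the move `a` off the context `K a`.
  let toY : (X → R) → U ⊕ X := fun P => if hP : P ∈ U then .inl ⟨P, hP⟩ else .inr x
  let K : X → U ⊕ X → R := fun a =>
    Sum.elim (fun P => P.1 a) (fun b => if b = a then r₁ else r₀)
  have hK : K.Injective := by
    intro a a' haa'
    by_contra hne
    have := congrFun haa' (.inr a)
    simp only [K, Sum.elim_inr, if_neg hne] at this
    exact hr this.symm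
  have hKtoY : ∀ a, ∀ P ∈ U, K a (toY P) = P a := fun a P hP => by simp [K, toY, hP]
  let δ : Sel R (U ⊕ X) :=
    ⟨fun k => (I (Function.invFun K k)).image toY, fun _ => (hI _).image _⟩
  have hδ : ∀ a, δ.fn (K a) = (I a).image toY := fun a => by
    simp only [δ, Function.leftInverse_invFun hK a]
  have hsup : ∀ a, (δ.fn (K a)).sup' (δ.ne _) (K a) = (I a).sup' (hI a) fun P => P a := by
    intro a
    rw [Finset.sup'_congr (δ.ne _) (hδ a) fun _ _ => rfl, Finset.sup'_image]
    exact Finset.sup'_congr _ rfl fun P hP => hKtoY a P (mem_U a P hP)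
  have hpick : (fun a => K a (toY (p a))) = fun a => p a a :=
    funext fun a => hKtoY a _ (mem_U a _ (hp a))
  simpa only [hsup] using h (U ⊕ X) δ K (fun a => toY (p a))
    (fun a => hδ a ▸ Finset.mem_image_of_mem _ (hp a)) x (hpick ▸ hx)

theorem upwardsClosed_cast {A B : Type u} (e : A = B) (ε : Sel R A) :
    UpwardsClosed (cast (congrArg (fun A => Sel R A) e) ε) ↔ UpwardsClosed ε := by
  subst e
  rfl

theorem upwardsClosedAgainst_cast {A A' B B' : Type u} (e : A = A') (e' : B = B') (ε : Sel R A)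
    (δ : Sel R B) :
    UpwardsClosedAgainst (cast (congrArg (fun A => Sel R A) e) ε)
        (cast (congrArg (fun B => Sel R B) e') δ) ↔
      UpwardsClosedAgainst ε δ := by
  subst e e'
  rfl

end Sel

section BigProd

variable {n : ℕ}

theorem mem_bigProd_zero {X : Fin 1 → Type u} (ε : ∀ i, Sel R (X i)) (q : (∀ i, X i) → R)
    (x : ∀ i, X i) :
    x ∈ (bigProd ε).fn q ↔ x 0 ∈ (ε 0).fn (fun a => q (oneEquiv X a)) :=
  Sel.mem_comap _ _ _ _

theorem mem_bigProd_succ {X : Fin (n + 2) → Type u} (ε : ∀ i, Sel R (X i))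
    (q : (∀ i, X i) → R) (x : ∀ i, X i) :
    x ∈ (bigProd ε).fn q ↔
      x 0 ∈ (ε 0).fn (fun a => ((bigProd fun i => ε i.succ).fn (fun g => q (Fin.cons a g))).sup'
          ((bigProd fun i => ε i.succ).ne _) (fun g => q (Fin.cons a g))) ∧
        Fin.tail x ∈ (bigProd fun i => ε i.succ).fn (fun g => q (Fin.cons (x 0) g)) :=
  (Sel.mem_comap _ _ _ _).trans (Sel.mk_mem_prod _ _ _ _ _)

theorem image_bigProd_last {X : Fin (n + 1) → Type u} [DecidableEq (X (Fin.last n))]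
    (ε : ∀ i, Sel R (X i)) (F : X (Fin.last n) → R) :
    ((bigProd ε).fn (fun g => F (g (Fin.last n)))).image (fun g => g (Fin.last n)) =
      (ε (Fin.last n)).fn F := by
  induction n with
  | zero =>
    ext y
    simp only [Finset.mem_image]
    exact ⟨fun ⟨g, hg, hgy⟩ => hgy ▸ (mem_bigProd_zero ε _ g).mp hg,
      fun hy => ⟨oneEquiv X y, (mem_bigProd_zero ε _ _).mpr hy, rfl⟩⟩
  | succ n ih =>
    ext y
    have ih' := fun y => Finset.ext_iff.mp (ih (fun i => ε i.succ) F) y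
    simp only [Finset.mem_image, mem_bigProd_succ] at ih' ⊢
    constructor
    · rintro ⟨g, ⟨-, hg⟩, rfl⟩
      exact (ih' _).mp ⟨_, hg, rfl⟩
    · intro hy
      obtain ⟨g, hg, rfl⟩ := (ih' y).mpr hy
      obtain ⟨a, ha⟩ := (ε 0).ne fun a =>
        ((bigProd fun i => ε i.succ).fn (fun h => F (h (Fin.last n)))).sup'
          ((bigProd fun i => ε i.succ).ne _) (fun h => F (h (Fin.last n)))
      exact ⟨Fin.cons a g, ⟨ha, hg⟩, rfl⟩

theorem sup'_bigProd_last {X : Fin (n + 1) → Type u} (ε : ∀ i, Sel R (X i))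
    (F : X (Fin.last n) → R) :
    ((bigProd ε).fn (fun g => F (g (Fin.last n)))).sup' ((bigProd ε).ne _)
        (fun g => F (g (Fin.last n))) =
      ((ε (Fin.last n)).fn F).sup' ((ε (Fin.last n)).ne _) F := by
  classical
  calc _ = (((bigProd ε).fn _).image fun g => g (Fin.last n)).sup'
          (((bigProd ε).ne _).image _) F := (Finset.sup'_image _ _).symm
    _ = _ := Finset.sup'_congr _ (image_bigProd_last ε F) fun _ _ => rfl

theorem apply_castSucc_mem_of_mem_bigProd {X : Fin (n + 1) → Type u} (ε : ∀ i, Sel R (X i))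
    (i : Fin n) (F : X i.castSucc → X (Fin.last n) → R) {g : ∀ j, X j}
    (hg : g ∈ (bigProd ε).fn (fun g => F (g i.castSucc) (g (Fin.last n)))) :
    g i.castSucc ∈ (ε i.castSucc).fn
      (fun a => ((ε (Fin.last n)).fn (F a)).sup' ((ε (Fin.last n)).ne _) (F a)) := by
  induction n with
  | zero => exact i.elim0
  | succ n ih =>
    rw [mem_bigProd_succ] at hg
    induction i using Fin.cases with
    | zero =>
      have hsup : (fun a => ((ε (Fin.last (n + 1))).fn (F a)).sup' ((ε _).ne _) (F a)) =
          fun a => ((bigProd fun i => ε i.succ).fn fun h => F a (h (Fin.last n))).sup'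
            ((bigProd _).ne _) fun h => F a (h (Fin.last n)) :=
        funext fun a => (sup'_bigProd_last (fun i => ε i.succ) (F a)).symm
      rw [hsup]
      exact hg.1
    | succ i => exact ih (fun j => ε j.succ) i F hg.2

end BigProd

section Plays

variable {n : ℕ} {X : Fin n → Type u}

def PartialPlay.nil : PartialPlay X 0 := fun _ h => absurd h (Nat.not_lt_zero _)

instance : Subsingleton (PartialPlay X 0) :=
  ⟨fun _ _ => funext fun _ => funext fun h => absurd h (Nat.not_lt_zero _)⟩

theorem PartialPlay.snoc_of_lt {i : Fin n} (x : PartialPlay X i) (y : X i) (j : Fin n)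
    (hj : (j : ℕ) < i + 1) (h : (j : ℕ) < i) : x.snoc y j hj = x j h :=
  dif_pos h

theorem PartialPlay.snoc_self {i : Fin n} (x : PartialPlay X i) (y : X i)
    (hi : (i : ℕ) < i + 1) : x.snoc y i hi = y :=
  dif_neg (lt_irrefl _)

theorem extPlay_eq_extPlay_val_succ (σ : ∀ i, Strat X i) (k : ℕ) (x : PartialPlay X k)
    (m : ℕ) (j : Fin n) (h : (j : ℕ) < m) :
    extPlay σ k x m j h = extPlay σ k x (j + 1) j (Nat.lt_succ_self _) := by
  induction m with
  | zero => exact absurd h (Nat.not_lt_zero _)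
  | succ m ih =>
    by_cases hk : (j : ℕ) < k
    · simp only [extPlay, hk, dite_true]
    · rcases Nat.lt_succ_iff_lt_or_eq.mp h with hm | rfl
      · rw [← ih hm]
        simp only [extPlay, hk, hm, dite_true, dite_false]
      · rfl

theorem stratExt_apply (σ : ∀ i, Strat X i) (k : ℕ) (x : PartialPlay X k) (j : Fin n) :
    stratExt σ k x j =
      if h : (j : ℕ) < k then x j h else σ j (fun j' _ => stratExt σ k x j') := by
  simp only [stratExt, extPlay_eq_extPlay_val_succ σ k x n j, extPlay, lt_irrefl, dite_false]
  split_ifs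
  · rfl
  · congr 1
    funext j' hj'
    rw [extPlay_eq_extPlay_val_succ σ k x _ j' hj', extPlay_eq_extPlay_val_succ σ k x n j']

theorem stratExt_of_lt (σ : ∀ i, Strat X i) {k : ℕ} (x : PartialPlay X k) {j : Fin n}
    (h : (j : ℕ) < k) : stratExt σ k x j = x j h := by
  rw [stratExt_apply, dif_pos h]

theorem stratExt_of_le (σ : ∀ i, Strat X i) {k : ℕ} (x : PartialPlay X k) {j : Fin n}
    (h : k ≤ j) : stratExt σ k x j = σ j (fun j' _ => stratExt σ k x j') := by
  rw [stratExt_apply, dif_neg h.not_gt]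

theorem stratPlay_apply (σ : ∀ i, Strat X i) (j : Fin n) :
    stratPlay σ j = σ j (fun j' _ => stratPlay σ j') :=
  stratExt_of_le σ _ (Nat.zero_le _)

theorem stratPlay_zero {X : Fin (n + 1) → Type u} (σ : ∀ i, Strat X i) :
    stratPlay σ 0 = σ 0 PartialPlay.nil :=
  (stratPlay_apply σ 0).trans (congrArg (σ 0) (Subsingleton.elim (α := PartialPlay X 0) _ _))

theorem stratExt_unique (σ : ∀ i, Strat X i) (k : ℕ) (x : PartialPlay X k) (g : ∀ j, X j)
    (hg : ∀ j, g j = if h : (j : ℕ) < k then x j h else σ j (fun j' _ => g j')) :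
    g = stratExt σ k x := by
  suffices ∀ N (j : Fin n), (j : ℕ) < N → g j = stratExt σ k x j from
    funext fun j => this n j j.isLt
  intro N
  induction N with
  | zero => exact fun j h => absurd h (Nat.not_lt_zero _)
  | succ N ih =>
    intro j hj
    rw [hg j, stratExt_apply]
    split_ifs
    · rfl
    · congr 1
      funext j' hj'
      exact ih j' (by omega)

end Plays

section SigmaG

variable {n : ℕ} {X : Fin n → Type u} (q : (∀ i, X i) → R) (ε : ∀ i, Sel R (X i))

theorem mem_sigmaG_iff {i : Fin n} (σi : Strat X i) :
    σi ∈ SigmaG q ε i ↔ ∀ x : PartialPlay X i, ∃ σ : ∀ j, Strat X j,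
      (∀ j, i < j → σ j ∈ SigmaG q ε j) ∧
      σi x ∈ (ε i).fn (fun y => q (stratExt σ (i + 1) (x.snoc y))) := by
  have consistent_at_self : ∀ (i : Fin n) (σi : Strat X i), σi ∈ SigmaG q ε i →
      ∀ x : PartialPlay X i, ∃ σ : ∀ j, Strat X j,
        (∀ j, i < j → σ j ∈ SigmaG q ε j) ∧
        σi x ∈ (ε i).fn (fun y => q (stratExt σ (i + 1) (x.snoc y))) := by
    intro i σi h x
    rw [SigmaG] at h
    obtain ⟨σ, hσ, hx⟩ := h i σi (by simp) x
    exact ⟨σ, fun j hj => by simpa [hj.ne, hj] using hσ j hj, hx⟩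
  refine ⟨consistent_at_self i σi, fun h => ?_⟩
  rw [SigmaG]
  intro j σj hσj x
  by_cases hij : i = j
  · subst hij
    obtain rfl : σj = σi := by simpa using hσj
    obtain ⟨σ, hσ, hx⟩ := h x
    exact ⟨σ, fun l hl => by simpa [hl.ne, hl] using hσ l hl, hx⟩
  · by_cases hlt : i < j
    · obtain ⟨σ, hσ, hx⟩ := consistent_at_self j σj (by simpa [hij, hlt] using hσj) x
      exact ⟨σ, fun l hl => by simpa [(hlt.trans hl).ne, hlt.trans hl] using hσ l hl, hx⟩
    · simp [hij, hlt] at hσj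

theorem exists_mem_sigmaG (i : Fin n) : ∃ σi, σi ∈ SigmaG q ε i := by
  induction i using WellFoundedGT.induction with
  | _ i ih =>
  choose τ hτ using ih
  have : ∀ j, Nonempty (X j) := fun j => (ε j).nonempty
  let σ : ∀ j, Strat X j := fun j =>
    if h : i < j then τ j h else fun _ => Classical.arbitrary (X j)
  refine ⟨fun x => ((ε i).ne fun y => q (stratExt σ (i + 1) (x.snoc y))).choose,
    (mem_sigmaG_iff q ε _).mpr fun x => ⟨σ, fun j hj => ?_, ((ε i).ne _).choose_spec⟩⟩
  simpa [σ, hj] using hτ j hj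

theorem mem_sigmaG_last {n : ℕ} {X : Fin (n + 1) → Type u} (q : (∀ i, X i) → R)
    (ε : ∀ i, Sel R (X i)) {σ : Strat X (Fin.last n)}
    (h : ∀ x, σ x ∈ (ε (Fin.last n)).fn fun y => q fun j => x.snoc y j j.isLt) :
    σ ∈ SigmaG q ε (Fin.last n) := by
  have : ∀ j, Nonempty (X j) := fun j => (ε j).nonempty
  refine (mem_sigmaG_iff q ε σ).mpr fun x =>
    ⟨fun j _ => Classical.arbitrary _, fun j hj => absurd hj (Fin.le_last j).not_gt, ?_⟩
  have hplay : ∀ y, stratExt (fun j _ => Classical.arbitrary (X j)) (Fin.last n + 1) (x.snoc y) =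
      fun j => x.snoc y j j.isLt := fun y => funext fun j => stratExt_of_lt _ _ j.isLt
  simpa only [hplay] using h x

end SigmaG

section Subgame

variable {n : ℕ} {X : Fin (n + 2) → Type u}

def PartialPlay.cons (a : X 0) {k : ℕ} (x : PartialPlay (fun j : Fin (n + 1) => X j.succ) k) :
    PartialPlay X (k + 1) :=
  fun j => Fin.cases (motive := fun j => (j : ℕ) < k + 1 → X j) (fun _ => a)
    (fun j hj => x j (Nat.succ_lt_succ_iff.mp hj)) j

@[simp] theorem PartialPlay.cons_zero (a : X 0) {k : ℕ}
    (x : PartialPlay (fun j : Fin (n + 1) => X j.succ) k) (h : ((0 : Fin (n + 2)) : ℕ) < k + 1) :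
    PartialPlay.cons a x 0 h = a := rfl

@[simp] theorem PartialPlay.cons_succ (a : X 0) {k : ℕ}
    (x : PartialPlay (fun j : Fin (n + 1) => X j.succ) k) (j : Fin (n + 1))
    (h : (j.succ : ℕ) < k + 1) :
    PartialPlay.cons a x j.succ h = x j (Nat.succ_lt_succ_iff.mp h) := rfl

theorem PartialPlay.cons_snoc (a : X 0) {j : Fin (n + 1)}
    (x : PartialPlay (fun j : Fin (n + 1) => X j.succ) j) (y : X j.succ) :
    PartialPlay.cons a (x.snoc y) = (PartialPlay.cons a x).snoc (i := j.succ) y := by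
  funext l hl
  induction l using Fin.cases with
  | zero => rfl
  | succ l =>
    simp only [PartialPlay.cons_succ, PartialPlay.snoc, Fin.val_succ, Nat.add_lt_add_iff_right]
    split_ifs
    · rfl
    · obtain rfl : l = j := Fin.ext (by simp at hl; omega)
      rfl

def Strat.restrict (a : X 0) {j : Fin (n + 1)} (τ : Strat X j.succ) :
    Strat (fun j : Fin (n + 1) => X j.succ) j :=
  fun x => τ (PartialPlay.cons a x)

theorem stratExt_cons (σ : ∀ j, Strat X j) (a : X 0) (k : ℕ)
    (x : PartialPlay (fun j : Fin (n + 1) => X j.succ) k) :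
    stratExt σ (k + 1) (PartialPlay.cons a x) =
      Fin.cons a (stratExt (fun j => (σ j.succ).restrict a) k x) := by
  refine (stratExt_unique _ _ _ _ fun j => ?_).symm
  induction j using Fin.cases with
  | zero => simp
  | succ j =>
    rw [Fin.cons_succ, stratExt_apply]
    simp only [Fin.val_succ, Nat.add_lt_add_iff_right]
    split_ifs
    · rfl
    · refine congrArg (σ j.succ) (funext fun l => funext fun hl => ?_)
      induction l using Fin.cases <;> rfl

theorem stratPlay_eq_cons (σ : ∀ j, Strat X j) :
    stratPlay σ =
      Fin.cons (stratPlay σ 0) (stratPlay fun j => (σ j.succ).restrict (stratPlay σ 0)) :=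
  calc stratPlay σ = stratExt σ (0 + 1) (PartialPlay.cons (stratPlay σ 0) PartialPlay.nil) := by
        refine stratExt_unique _ _ _ _ fun j => ?_
        induction j using Fin.cases with
        | zero => rfl
        | succ j => simp [stratPlay_apply σ j.succ]
    _ = _ := stratExt_cons _ _ _ _

theorem stratExt_snoc_nil (τ : ∀ j, Strat X j) (y : X 0) :
    stratExt τ ((0 : Fin (n + 2)) + 1) (PartialPlay.nil.snoc y) =
      Fin.cons y (stratPlay fun j => (τ j.succ).restrict y) := by
  have : PartialPlay.nil.snoc (i := 0) y = PartialPlay.cons (X := X) y PartialPlay.nil := by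
    funext l hl
    induction l using Fin.cases with
    | zero => rfl
    | succ l => exact absurd hl (by simp)
  rw [this]
  exact stratExt_cons τ y 0 _

theorem Strat.restrict_mem_sigmaG {q : (∀ i, X i) → R} {ε : ∀ i, Sel R (X i)}
    {j : Fin (n + 1)} {τ : Strat X j.succ} (hτ : τ ∈ SigmaG q ε j.succ) (a : X 0) :
    τ.restrict a ∈ SigmaG (fun g => q (Fin.cons a g)) (fun i => ε i.succ) j := by
  induction j using WellFoundedGT.induction with
  | _ j ih =>
  rw [mem_sigmaG_iff] at hτ ⊢
  intro x
  obtain ⟨σ, hσ, hsel⟩ := hτ (PartialPlay.cons a x)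
  refine ⟨fun l => (σ l.succ).restrict a,
    fun l hl => ih l hl (hσ l.succ (Fin.succ_lt_succ_iff.mpr hl)), ?_⟩
  have hctx : ∀ y, stratExt σ (j.succ + 1) ((PartialPlay.cons a x).snoc y) =
      Fin.cons a (stratExt (fun l => (σ l.succ).restrict a) (j + 1) (x.snoc y)) := fun y => by
    rw [← PartialPlay.cons_snoc]
    exact stratExt_cons σ a _ _
  simp only [hctx] at hsel
  exact hsel

end Subgame

section Game

variable {n : ℕ}

theorem IsSigmaPlay.mem_bigProd {X : Fin (n + 1) → Type u} {ε : ∀ i, Sel R (X i)}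
    (hup : ∀ i : Fin n, UpwardsClosed (ε i.castSucc)) {q : (∀ i, X i) → R} {x : ∀ i, X i}
    (hx : IsSigmaPlay q ε x) : x ∈ (bigProd ε).fn q := by
  induction n with
  | zero =>
    obtain ⟨σ, hσ, rfl⟩ := hx
    obtain ⟨τ, -, hsel⟩ := (mem_sigmaG_iff q ε (σ 0)).mp (hσ 0) PartialPlay.nil
    have hctx : ∀ y, stratExt τ ((0 : Fin 1) + 1) (PartialPlay.nil.snoc y) = oneEquiv X y :=
      fun y => funext fun j => by
        obtain rfl : j = 0 := Fin.fin_one_eq_zero j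
        exact (stratExt_of_lt τ _ (by simp)).trans (PartialPlay.snoc_self _ _ _)
    rw [mem_bigProd_zero, stratPlay_zero]
    simpa only [hctx] using hsel
  | succ n ih =>
    obtain ⟨σ, hσ, rfl⟩ := hx
    have tail_mem : ∀ (a : X 0) (τ : ∀ j, Strat X j),
        (∀ j : Fin (n + 1), τ j.succ ∈ SigmaG q ε j.succ) →
        stratPlay (fun j => (τ j.succ).restrict a) ∈
          (bigProd fun i => ε i.succ).fn (fun g => q (Fin.cons a g)) :=
      fun a τ hτ =>
        ih (fun i => hup i.succ) ⟨_, fun j => Strat.restrict_mem_sigmaG (hτ j) a, rfl⟩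
    obtain ⟨τ, hτ, hsel⟩ := (mem_sigmaG_iff q ε (σ 0)).mp (hσ 0) PartialPlay.nil
    rw [stratPlay_eq_cons σ, mem_bigProd_succ, Fin.cons_zero, Fin.tail_cons]
    refine ⟨(hup 0 : UpwardsClosed (ε 0)).upwardsClosedAgainst _ (fun a g => q (Fin.cons a g)) _
      (fun a => tail_mem a τ fun j => hτ _ j.succ_pos) _ ?_, tail_mem _ σ fun j => hσ _⟩
    rw [stratPlay_zero]
    simp only [stratExt_snoc_nil] at hsel
    exact hsel

theorem upwardsClosedAgainst_of_sigmaPlays_subset {X : Fin (n + 1) → Type u}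
    {ε : ∀ i, Sel R (X i)} (H : ∀ q x, IsSigmaPlay q ε x → x ∈ (bigProd ε).fn q)
    (i : Fin n) :
    UpwardsClosedAgainst (ε i.castSucc) (ε (Fin.last n)) := by
  intro F f hf x hx
  let q : (∀ j, X j) → R := fun g => F (g i.castSucc) (g (Fin.last n))
  have update_mem : ∀ (τ : ∀ j, Strat X j), (∀ j, τ j ∈ SigmaG q ε j) →
      ∀ k, ∀ s ∈ SigmaG q ε k, ∀ j, Function.update τ k s j ∈ SigmaG q ε j :=
    fun τ hτ k s hs => (Function.forall_update_iff τ fun j s => s ∈ SigmaG q ε j).mpr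
      ⟨hs, fun j _ => hτ j⟩
  choose σ₀ hσ₀ using exists_mem_sigmaG q ε
  let σlast : Strat X (Fin.last n) := fun xp => f (xp i.castSucc i.castSucc_lt_last)
  have hlast : σlast ∈ SigmaG q ε (Fin.last n) := mem_sigmaG_last q ε fun xp => by
    simp only [q, PartialPlay.snoc_self, PartialPlay.snoc_of_lt _ _ _ _ i.castSucc_lt_last]
    exact hf _
  let σ₁ := Function.update σ₀ (Fin.last n) σlast
  let σmid : Strat X i.castSucc := fun _ => x
  have hmid : σmid ∈ SigmaG q ε i.castSucc := by
    refine (mem_sigmaG_iff q ε _).mpr fun xp =>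
      ⟨σ₁, fun j _ => update_mem σ₀ hσ₀ _ _ hlast j, ?_⟩
    have hctx : ∀ y, q (stratExt σ₁ (i.castSucc + 1) (xp.snoc y)) = F y (f y) := fun y => by
      have hy : stratExt σ₁ (i.castSucc + 1) (xp.snoc y) i.castSucc = y :=
        (stratExt_of_lt σ₁ _ (Nat.lt_succ_self _)).trans (PartialPlay.snoc_self _ _ _)
      show F _ _ = _
      rw [hy, stratExt_of_le σ₁ _ i.castSucc_lt_last,
        show σ₁ (Fin.last n) = σlast from Function.update_self ..]
      exact congrArg (F y ∘ f) hy
    simpa only [hctx] using hx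
  let σ := Function.update σ₁ i.castSucc σmid
  have hplay : stratPlay σ i.castSucc = x := by
    rw [stratPlay_apply, show σ i.castSucc = σmid from Function.update_self ..]
  simpa only [hplay] using apply_castSucc_mem_of_mem_bigProd ε i F
    (H q _ ⟨σ, update_mem σ₁ (update_mem σ₀ hσ₀ _ _ hlast) _ _ hmid, rfl⟩)

end Game

section Snoc

variable {m : ℕ} {X : Fin m → Type u} {Y : Type u}

theorem snocTypes_castSucc (i : Fin m) : snocTypes X Y i.castSucc = X i :=
  Fin.snoc_castSucc (α := fun _ => Type u) ..

theorem snocTypes_last : snocTypes X Y (Fin.last m) = Y :=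
  Fin.snoc_last (α := fun _ => Type u) ..

theorem snocSel_castSucc (ε : ∀ i, Sel R (X i)) (δ : Sel R Y) (i : Fin m) :
    snocSel ε δ i.castSucc =
      cast (congrArg (fun A => Sel R A) (snocTypes_castSucc i).symm) (ε i) :=
  Fin.lastCases_castSucc ..

theorem snocSel_last (ε : ∀ i, Sel R (X i)) (δ : Sel R Y) :
    snocSel ε δ (Fin.last m) =
      cast (congrArg (fun A => Sel R A) (snocTypes_last (X := X)).symm) δ :=
  Fin.lastCases_last ..

theorem upwardsClosed_snocSel_castSucc (ε : ∀ i, Sel R (X i)) (δ : Sel R Y) (i : Fin m) :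
    UpwardsClosed (snocSel ε δ i.castSucc) ↔ UpwardsClosed (ε i) := by
  rw [snocSel_castSucc]
  exact upwardsClosed_cast (snocTypes_castSucc i).symm _

theorem upwardsClosedAgainst_snocSel (ε : ∀ i, Sel R (X i)) (δ : Sel R Y) (i : Fin m) :
    UpwardsClosedAgainst (snocSel ε δ i.castSucc) (snocSel ε δ (Fin.last m)) ↔
      UpwardsClosedAgainst (ε i) δ := by
  rw [snocSel_castSucc, snocSel_last]
  exact upwardsClosedAgainst_cast (snocTypes_castSucc i).symm snocTypes_last.symm _ _

end Snoc

theorem upwardsClosed_iff_sigmaPlays_subset_bigProd_general {R : Type u} [SemilatticeSup R]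
    [Nontrivial R] {m : ℕ} {X : Fin m → Type u}
    [∀ i, Fintype (X i)]
    (ε : ∀ i, Sel R (X i)) :
    (∀ i, UpwardsClosed (ε i)) ↔
      ∀ (Y : Type u), Fintype Y → Nonempty Y →
        ∀ (δ : Sel R Y) (q : (∀ i, snocTypes X Y i) → R)
          (x : ∀ i, snocTypes X Y i),
          IsSigmaPlay q (snocSel ε δ) x → x ∈ (bigProd (snocSel ε δ)).fn q := by
  constructor
  · intro hup Y _ _ δ q x hx
    exact hx.mem_bigProd fun i => (upwardsClosed_snocSel_castSucc ε δ i).mpr (hup i)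
  · intro H i
    exact upwardsClosed_of_forall_upwardsClosedAgainst fun Y _ δ =>
      (upwardsClosedAgainst_snocSel ε δ i).mp
        (upwardsClosedAgainst_of_sigmaPlays_subset (H Y ‹_› δ.nonempty δ) i)

/-- `ε_i` (for the non-final rounds `i`) are all upwards closed iff for every choice
of final-round move type `Xₙ`, selection function `εₙ` and outcome function `q`,
every `Σ(G)` play of the resulting game `G` lies in the `(m+1)`-fold product of
selection functions on `q`. -/
theorem upwardsClosed_iff_sigmaPlays_subset_bigProd {R : Type u} [SemilatticeSup R]
    [Nontrivial R] {m : ℕ} {X : Fin m → Type u}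
    [∀ i, Fintype (X i)] [∀ i, Nonempty (X i)]
    (ε : ∀ i, Sel R (X i)) :
    (∀ i, UpwardsClosed (ε i)) ↔
      ∀ (Y : Type u), Fintype Y → Nonempty Y →
        ∀ (δ : Sel R Y) (q : (∀ i, snocTypes X Y i) → R)
          (x : ∀ i, snocTypes X Y i),
          IsSigmaPlay q (snocSel ε δ) x → x ∈ (bigProd (snocSel ε δ)).fn q :=
  upwardsClosed_iff_sigmaPlays_subset_bigProd_general ε
end
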